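/- arXiv:2212.03228 — 3 statements merged into one kernel-verified Lean document; each statement's English description precedes it below -/
import Mathlib

section
/- Recursive feasibility extension: under the hypotheses of the finite-horizon safety theorem, if at some time t+σ with 1 ≤ σ ≤ H+1 the safety check succeeds again (a new certified fallback plan with the same properties exists from x_{t+σ}), then the concatenated filtered closed loop avoids F for all steps up to t+σ+H+1; inductively, if the check succeeds infinitely often with gaps at most H+1, the closed loop avoids F for all time. -/
/-- recursive feasibility: suppose each certified time `s` guarantees
that the filtered closed-loop trajectory `x` avoids the failure set `F` for the next
`H+1` steps.  If the certification times `t 0 < t 1 < ⋯` form an infinite sequence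
with gaps `t (i+1) − t i ≤ H+1`, then the closed loop avoids `F` at every step after
`t 0`. -/
theorem stmt13 {X : Type*} (F : Set X) (H : ℕ) (x : ℕ → X)
    (Certified : ℕ → Prop)
    (hcert : ∀ s : ℕ, Certified s → ∀ τ : ℕ, 1 ≤ τ → τ ≤ H + 1 → x (s + τ) ∉ F)
    (t : ℕ → ℕ) (hmono : StrictMono t)
    (ht : ∀ i : ℕ, Certified (t i))
    (hgap : ∀ i : ℕ, t (i + 1) - t i ≤ H + 1) :
    ∀ k : ℕ, t 0 < k → x k ∉ F := by
  intro k hk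
  -- find the largest i with t i < k
  have hbd : ∀ i, t i < k → i < k := fun i hi =>
    lt_of_le_of_lt (hmono.id_le i) hi
  -- consider the set of indices i with t i < k
  have hex : ∃ i, t i < k ∧ t (i + 1) ≥ k := by
    by_contra h
    push_neg at h
    have : ∀ i, t i < k := by
      intro i
      induction i with
      | zero => exact hk
      | succ n ih => exact h n ih
    have h1 := this k
    have h2 := hmono.id_le k
    simp at h2
    omega
  obtain ⟨i, hik, hik1⟩ := hex
  have hτ1 : 1 ≤ k - t i := Nat.le_sub_of_add_le (by omega)
  have hτ2 : k - t i ≤ H + 1 := by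
    have := hgap i
    omega
  have := hcert (t i) (ht i) (k - t i) hτ1 hτ2
  rwa [Nat.add_sub_cancel' (le_of_lt hik)] at this
end

section
/- The pointwise limit V_∞(x) = inf_k (T^k g)(x) of the monotone nonincreasing sequence T^k g is the maximal fixed point of T below g when X, U, D are finite: V_∞ satisfies T V_∞ = V_∞, and any W with W ≤ g and T W = W satisfies W ≤ V_∞. -/
/-- Undiscounted Isaacs safety operator. -/
noncomputable def Topr {X U D : Type*} [Fintype U] [Fintype D] [Nonempty U] [Nonempty D]
    (f : X → U → D → X) (g : X → ℝ) (V : X → ℝ) : X → ℝ := fun x =>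
  Finset.univ.sup' Finset.univ_nonempty fun u : U =>
    Finset.univ.inf' Finset.univ_nonempty fun d : D =>
      min (g x) (V (f x u d))

section aux

variable {X U D : Type*} [Fintype U] [Fintype D] [Nonempty U] [Nonempty D]
  (f : X → U → D → X) (g : X → ℝ)

lemma Topr_mono {V W : X → ℝ} (h : ∀ x, V x ≤ W x) :
    ∀ x, Topr f g V x ≤ Topr f g W x := by
  intro x
  apply Finset.sup'_mono_fun
  intro u _
  exact Finset.le_inf' _ _ fun d _ =>
    le_trans (Finset.inf'_le _ (Finset.mem_univ d)) (min_le_min le_rfl (h _))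

lemma Topr_le_g (V : X → ℝ) : ∀ x, Topr f g V x ≤ g x := by
  intro x
  apply Finset.sup'_le
  intro u _
  exact le_trans (Finset.inf'_le _ (Finset.mem_univ (Classical.arbitrary D)))
    (min_le_left _ _)

lemma iter_antitone : ∀ k x, (Topr f g)^[k+1] g x ≤ (Topr f g)^[k] g x := by
  intro k
  induction k with
  | zero => simpa using Topr_le_g f g g
  | succ n ih =>
    intro x
    rw [Function.iterate_succ_apply', Function.iterate_succ_apply']
    exact Topr_mono f g (fun y => by
      have := ih y; rwa [Function.iterate_succ_apply'] at this) x

lemma iter_antitone' (x : X) : Antitone fun k => (Topr f g)^[k] g x :=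
  antitone_nat_of_succ_le fun n => iter_antitone f g n x

lemma iter_lb [Nonempty X] [Fintype X] :
    ∀ k x, Finset.univ.inf' Finset.univ_nonempty g ≤ (Topr f g)^[k] g x := by
  intro k
  induction k with
  | zero => intro x; exact Finset.inf'_le _ (Finset.mem_univ x)
  | succ n ih =>
    intro x
    rw [Function.iterate_succ_apply']
    refine le_trans ?_ (Finset.le_sup' _ (Finset.mem_univ (Classical.arbitrary U)))
    apply Finset.le_inf'
    intro d _
    exact le_min (Finset.inf'_le _ (Finset.mem_univ x)) (ih _)

end aux

open Filter Topology

/-- for finite `X`, `U`, `D`, the pointwise limit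
`V_∞(x) = inf_k (T^k g)(x)` of the nonincreasing sequence `T^k g` is the maximal
fixed point of the Isaacs operator below `g`. -/
theorem stmt16 {X U D : Type*} [Fintype X] [Fintype U] [Fintype D]
    [Nonempty X] [Nonempty U] [Nonempty D]
    (f : X → U → D → X) (g : X → ℝ)
    (Vinf : X → ℝ) (hVinf : ∀ x, Vinf x = ⨅ k : ℕ, (Topr f g)^[k] g x) :
    Topr f g Vinf = Vinf ∧
    ∀ W : X → ℝ, (∀ x, W x ≤ g x) → Topr f g W = W → ∀ x, W x ≤ Vinf x := by
  have hbdd : ∀ x : X, BddBelow (Set.range fun k : ℕ => (Topr f g)^[k] g x) := by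
    intro x
    refine ⟨Finset.univ.inf' Finset.univ_nonempty g, fun y ⟨k, hk⟩ => ?_⟩
    rw [← hk]
    exact iter_lb f g k x
  have htend : ∀ x : X, Tendsto (fun k : ℕ => (Topr f g)^[k] g x) atTop (𝓝 (Vinf x)) := by
    intro x
    rw [hVinf]
    exact tendsto_atTop_ciInf (iter_antitone' f g x) (hbdd x)
  -- continuity of T
  have hTtend : ∀ x : X, Tendsto (fun k : ℕ => Topr f g ((Topr f g)^[k] g) x) atTop
      (𝓝 (Topr f g Vinf x)) := by
    intro x
    apply Filter.Tendsto.finset_sup'_nhds_apply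
    intro u _
    apply Filter.Tendsto.finset_inf'_nhds_apply
    intro d _
    exact (tendsto_const_nhds).min (htend _)
  -- but T (T^k g) = T^(k+1) g → Vinf x
  have hTtend' : ∀ x : X, Tendsto (fun k : ℕ => Topr f g ((Topr f g)^[k] g) x) atTop
      (𝓝 (Vinf x)) := by
    intro x
    have := (htend x).comp (tendsto_add_atTop_nat 1)
    simp only [Function.comp_def] at this
    convert this using 2 with k
    rw [Function.iterate_succ_apply']
  constructor
  · funext x
    exact tendsto_nhds_unique (hTtend x) (hTtend' x)
  · intro W hWg hWfix x
    rw [hVinf]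
    apply le_ciInf
    intro k
    have : ∀ y, W y ≤ (Topr f g)^[k] g y := by
      induction k with
      | zero => simpa using hWg
      | succ n ih =>
        intro y
        rw [Function.iterate_succ_apply']
        calc W y = Topr f g W y := (congrFun hWfix y).symm
          _ ≤ _ := Topr_mono f g ih y
    exact this x
end

section
/- Safe set characterization by the undiscounted value: if U and D are finite and X is finite, then V_∞(x) ≥ 0 if and only if x belongs to the safe set, i.e., there exists a stationary control policy π_u : X → U such that for every disturbance sequence (d_t) with d_t ∈ D, the closed-loop trajectory from x satisfies g(x_t) ≥ 0 for all t ∈ ℕ. -/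
/-- Closed-loop trajectory: stationary state-feedback control against an arbitrary
disturbance sequence. -/
def trajFeedback {X U D : Type*} (f : X → U → D → X) (π : X → U) (d : ℕ → D)
    (x : X) : ℕ → X
  | 0 => x
  | k + 1 => f (trajFeedback f π d x k) (π (trajFeedback f π d x k)) (d k)

open Function

section Trajectory

variable {X U D : Type*} (f : X → U → D → X)

lemma trajFeedback_succ' (π : X → U) (d : ℕ → D) (x : X) (t : ℕ) :
    trajFeedback f π d x (t + 1) = trajFeedback f π (d ∘ Nat.succ) (f x (π x) (d 0)) t := by
  induction t with
  | zero => rfl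
  | succ t ih => rw [trajFeedback, ih]; rfl

def IsSafePolicy (g : X → ℝ) (π : X → U) (x : X) : Prop :=
  ∀ d : ℕ → D, ∀ t, 0 ≤ g (trajFeedback f π d x t)

variable {f} {g : X → ℝ} {π : X → U} {x : X}

lemma IsSafePolicy.nonneg [Nonempty D] (h : IsSafePolicy f g π x) : 0 ≤ g x :=
  h (fun _ => Classical.arbitrary D) 0

lemma IsSafePolicy.step (h : IsSafePolicy f g π x) (d₀ : D) :
    IsSafePolicy f g π (f x (π x) d₀) := by
  intro d t
  have h' := h (fun n => Nat.casesOn n d₀ d) (t + 1)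
  rw [trajFeedback_succ'] at h'
  exact h'

lemma exists_policy_forall_trajFeedback_mem [Nonempty U] {S : Set X}
    (hS : ∀ y ∈ S, ∃ u, ∀ d, f y u d ∈ S) :
    ∃ π : X → U, ∀ x ∈ S, ∀ d t, trajFeedback f π d x t ∈ S := by
  have hsel : ∀ y, ∃ u, y ∈ S → ∀ d, f y u d ∈ S := fun y => by
    by_cases hy : y ∈ S
    · obtain ⟨u, hu⟩ := hS y hy
      exact ⟨u, fun _ => hu⟩
    · exact ⟨Classical.arbitrary U, fun h => absurd h hy⟩
  choose π hπ using hsel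
  refine ⟨π, fun x hx d t => ?_⟩
  induction t with
  | zero => exact hx
  | succ t ih => exact hπ _ ih (d t)

end Trajectory

section Isaacs

variable {X U D : Type*} [Fintype U] [Fintype D] [Nonempty U] [Nonempty D]
  (f : X → U → D → X) (g : X → ℝ)

lemma le_Topr_iff {a : ℝ} {V : X → ℝ} {x : X} :
    a ≤ Topr f g V x ↔ a ≤ g x ∧ ∃ u, ∀ d, a ≤ V (f x u d) := by
  simp [Topr, Finset.le_sup'_iff, Finset.le_inf'_iff, forall_and]

lemma Topr_mono_s18 : Monotone (Topr f g) := fun V W hVW x => by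
  obtain ⟨hg, u, hu⟩ := (le_Topr_iff f g).1 (le_refl (Topr f g V x))
  exact (le_Topr_iff f g).2 ⟨hg, u, fun d => (hu d).trans (hVW _)⟩

lemma Topr_le (V : X → ℝ) : Topr f g V ≤ g := fun x =>
  ((le_Topr_iff f g).1 (le_refl (Topr f g V x))).1

lemma iterate_Topr_antitone : Antitone fun k => (Topr f g)^[k] g :=
  antitone_nat_of_succ_le fun k => by
    rw [iterate_succ_apply]
    exact (Topr_mono_s18 f g).iterate k (Topr_le f g g)

lemma le_iterate_Topr {b : ℝ} (hb : ∀ y, b ≤ g y) (k : ℕ) (x : X) :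
    b ≤ (Topr f g)^[k] g x := by
  induction k generalizing x with
  | zero => exact hb x
  | succ k ih =>
    rw [iterate_succ_apply', le_Topr_iff]
    exact ⟨hb x, Classical.arbitrary U, fun _ => ih _⟩

lemma bddBelow_range_iterate_Topr [Finite X] (x : X) :
    BddBelow (Set.range fun k => (Topr f g)^[k] g x) := by
  obtain ⟨b, hb⟩ := (Set.finite_range g).bddBelow
  exact ⟨b, by rintro _ ⟨k, rfl⟩; exact le_iterate_Topr f g (fun y => hb ⟨y, rfl⟩) k x⟩

lemma exists_forall_nonneg_iterate_Topr {y : X} (hy : ∀ k, 0 ≤ (Topr f g)^[k] g y) :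
    ∃ u, ∀ d k, 0 ≤ (Topr f g)^[k] g (f y u d) := by
  have hstep : ∀ k, ∃ u, ∀ d, 0 ≤ (Topr f g)^[k] g (f y u d) := fun k => by
    have h := hy (k + 1)
    rw [iterate_succ_apply', le_Topr_iff] at h
    exact h.2
  choose u hu using hstep
  obtain ⟨u₀, hu₀⟩ := Finite.exists_infinite_fiber u
  refine ⟨u₀, fun d k => ?_⟩
  obtain ⟨k', hk', hkk'⟩ := (Set.infinite_coe_iff.mp hu₀).exists_gt k
  have h := hu k' d
  rw [show u k' = u₀ from hk'] at h
  exact h.trans (iterate_Topr_antitone f g hkk'.le _)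

lemma IsSafePolicy.nonneg_iterate_Topr {π : X → U} {x : X} (h : IsSafePolicy f g π x)
    (k : ℕ) : 0 ≤ (Topr f g)^[k] g x := by
  induction k generalizing x with
  | zero => exact h.nonneg
  | succ k ih =>
    rw [iterate_succ_apply', le_Topr_iff]
    exact ⟨h.nonneg, π x, fun d => ih (h.step d)⟩

end Isaacs

theorem stmt18_general {X U D : Type*} [Fintype X] [Fintype U] [Fintype D]
    [Nonempty U] [Nonempty D]
    (f : X → U → D → X) (g : X → ℝ)
    (Vinf : X → ℝ) (hVinf : ∀ x, Vinf x = ⨅ k : ℕ, (Topr f g)^[k] g x) (x : X) :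
    0 ≤ Vinf x ↔
      ∃ πu : X → U, ∀ d : ℕ → D, ∀ t : ℕ, 0 ≤ g (trajFeedback f πu d x t) := by
  rw [hVinf, le_ciInf_iff (bddBelow_range_iterate_Topr f g x)]
  constructor
  · intro hx
    obtain ⟨π, hπ⟩ := exists_policy_forall_trajFeedback_mem
      (S := {y | ∀ k, 0 ≤ (Topr f g)^[k] g y}) fun y hy => exists_forall_nonneg_iterate_Topr f g hy
    exact ⟨π, fun d t => hπ x hx d t 0⟩
  · rintro ⟨π, hπ⟩
    exact IsSafePolicy.nonneg_iterate_Topr f g hπ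

/-- safe set characterization: for finite `X`, `U`, `D`, the
undiscounted value `V_∞(x) = inf_k (T^k g)(x)` is nonnegative iff there is a
stationary control policy keeping `g ≥ 0` along the closed-loop trajectory from `x`
for all time, against every disturbance sequence. -/
theorem stmt18 {X U D : Type*} [Fintype X] [Fintype U] [Fintype D]
    [Nonempty X] [Nonempty U] [Nonempty D]
    (f : X → U → D → X) (g : X → ℝ)
    (Vinf : X → ℝ) (hVinf : ∀ x, Vinf x = ⨅ k : ℕ, (Topr f g)^[k] g x) (x : X) :
    0 ≤ Vinf x ↔
      ∃ πu : X → U, ∀ d : ℕ → D, ∀ t : ℕ, 0 ≤ g (trajFeedback f πu d x t) :=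
  stmt18_general f g Vinf hVinf x
end
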